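/- For β > 0 let D(β) be the determinant of the 2×2 matrix with first column (∂_β G₁(β,σ), ∂_β G₂(β,σ)) and second column (−σ ∂_σ G₁(β,σ), −σ ∂_σ G₂(β,σ)), where G₁(β,σ) = 𝔠(1/β − 1) + log σ and G₂(β,σ) = π²(1/β² + 1/2)/6 + (𝔠(1/β − 1) + log σ)², with 𝔠 a fixed real constant (Euler's constant). Then D(β) = −π²/(3β³), which is nonzero for every β > 0 and every σ > 0. -/

import Mathlib

/-!
Up to the function `π²(1/β² + 1/2)/6` of `β` alone, `G₂ = G₁²`. Hence the second row of the matrix is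
`2 G₁` times the first plus `(∂_β(π²(1/β² + 1/2)/6), 0)`, and the determinant collapses to
`(σ ∂_σ G₁) · ∂_β(π²/(6β²)) = 1 · (-π²/(3β³))`.
-/

open Real

theorem Matrix.det_fin_two_of_row_eq_mul_add {R : Type*} [CommRing R] (a b m v : R) :
    !![a, b; m * a + v, m * b].det = -b * v := by
  rw [Matrix.det_fin_two_of]
  ring

theorem hasDerivAt_mul_one_div_sub_one (c : ℝ) {x : ℝ} (hx : x ≠ 0) :
    HasDerivAt (fun b => c * (1 / b - 1)) (-c / x ^ 2) x := by
  simp only [one_div]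
  exact (((hasDerivAt_inv hx).sub_const 1).const_mul c).congr_deriv (by ring)

theorem hasDerivAt_mul_one_div_sq_add_half_div_six (K : ℝ) {x : ℝ} (hx : x ≠ 0) :
    HasDerivAt (fun b => K * (1 / b ^ 2 + 1 / 2) / 6) (-K / (3 * x ^ 3)) x := by
  simp only [one_div]
  refine ((((hasDerivAt_pow 2 x).fun_inv (pow_ne_zero 2 hx)).add_const 2⁻¹).const_mul K
    |>.div_const 6).congr_deriv ?_
  field_simp
  ring

theorem stmt_18 (𝔠 : ℝ) (β σ : ℝ) (hβ : 0 < β) (hσ : 0 < σ)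
    (G₁ G₂ : ℝ → ℝ → ℝ)
    (hG₁ : ∀ b s, G₁ b s = 𝔠 * (1/b - 1) + Real.log s)
    (hG₂ : ∀ b s, G₂ b s = Real.pi^2 * (1/b^2 + 1/2) / 6 + (𝔠 * (1/b - 1) + Real.log s)^2) :
    Matrix.det !![deriv (fun b => G₁ b σ) β, -σ * deriv (fun s => G₁ β s) σ;
                  deriv (fun b => G₂ b σ) β, -σ * deriv (fun s => G₂ β s) σ]
      = -Real.pi^2 / (3 * β^3) ∧
    -Real.pi^2 / (3 * β^3) ≠ 0 := by
  have hG₂_eq : ∀ b s, G₂ b s = π ^ 2 * (1 / b ^ 2 + 1 / 2) / 6 + G₁ b s ^ 2 := by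
    simp only [hG₁, hG₂, forall_const]
  have hG₁β : HasDerivAt (fun b => G₁ b σ) (-𝔠 / β ^ 2) β := by
    simpa only [hG₁] using (hasDerivAt_mul_one_div_sub_one 𝔠 hβ.ne').add_const (log σ)
  have hG₁σ : HasDerivAt (fun s => G₁ β s) σ⁻¹ σ := by
    simpa only [hG₁] using (hasDerivAt_log hσ.ne').const_add (𝔠 * (1 / β - 1))
  have hG₂β : HasDerivAt (fun b => G₂ b σ)
      (2 * G₁ β σ * (-𝔠 / β ^ 2) + -π ^ 2 / (3 * β ^ 3)) β := by
    simp only [hG₂_eq]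
    exact ((hasDerivAt_mul_one_div_sq_add_half_div_six (π ^ 2) hβ.ne').fun_add
      (hG₁β.fun_pow 2)).congr_deriv (by norm_num; ring)
  have hG₂σ : HasDerivAt (fun s => G₂ β s) (2 * G₁ β σ * σ⁻¹) σ := by
    simp only [hG₂_eq]
    exact ((hG₁σ.fun_pow 2).const_add _).congr_deriv (by norm_num)
  refine ⟨?_, by rw [neg_div, neg_ne_zero]; positivity⟩
  rw [hG₁β.deriv, hG₁σ.deriv, hG₂β.deriv, hG₂σ.deriv,
    show -σ * (2 * G₁ β σ * σ⁻¹) = 2 * G₁ β σ * (-σ * σ⁻¹) by ring,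
    Matrix.det_fin_two_of_row_eq_mul_add]
  field_simp
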